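/- Let ω be a finite multiset of pairs of positive integers with |ω| = n, where |ω| denotes the sum of d·e over the pairs (d,e) ∈ ω (with multiplicity), and for d ≥ 1 let ω(d) denote the sub-multiset of ω consisting of the pairs whose first coordinate equals d. Let χ be a Hayes character modulo some R_{ℓ,M}. Then Σ_{f ∈ M_n, ω_f = ω} χ(f) = ∏_{d=1}^{n} ( Σ_{f ∈ M_{|ω(d)|}, ω_f = ω(d)} χ(f) ), where for |ω(d)| = 0 the corresponding factor is χ(1) = 1. -/

import Mathlib

open Polynomial UniqueFactorizationMonoid

noncomputable section

/-- The finset of all polynomials of degree at most `n` over the finite field `F`. -/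
def polysDegLE (F : Type) [Field F] [Fintype F] (n : ℕ) : Finset (Polynomial F) := by
  classical exact
    (Finset.univ : Finset (Fin (n + 1) → F)).image fun c =>
      ∑ i : Fin (n + 1), Polynomial.C (c i) * Polynomial.X ^ (i : ℕ)

/-- `Mn F n` is the finset of monic polynomials of degree `n` over `F`. -/
def Mn (F : Type) [Field F] [Fintype F] (n : ℕ) : Finset (Polynomial F) := by
  classical exact (polysDegLE F n).filter fun f => f.Monic ∧ f.natDegree = n

/-- The short interval `I(f₀, h) = {f : deg (f - f₀) ≤ h}`. -/
def shortInterval {F : Type} [Field F] [Fintype F] (f₀ : Polynomial F) (h : ℕ) :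
    Finset (Polynomial F) := by
  classical exact (polysDegLE F h).image fun e => f₀ + e

/-- The extended factorization type of a polynomial: the multiset of pairs
`(deg P, e_P)` over the distinct monic irreducible factors `P` of `f`, where `e_P` is
the multiplicity of `P` in `f`. -/
def factType {F : Type} [Field F] (f : Polynomial F) : Multiset (ℕ × ℕ) := by
  classical exact
    (normalizedFactors f).toFinset.val.map fun P =>
      (P.natDegree, (normalizedFactors f).count P)

/-- A factorization function depends only on the extended factorization type. -/
def IsFactorizationFunction {F : Type} [Field F] (α : Polynomial F → ℂ) : Prop :=
  ∀ f g : Polynomial F, f.Monic → g.Monic → factType f = factType g → α f = α g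

/-- Mean value of `α` over the finite set `S`. -/
def avg {F : Type} [Field F] (S : Finset (Polynomial F)) (α : Polynomial F → ℂ) : ℂ :=
  (S.card : ℂ)⁻¹ * ∑ f ∈ S, α f

/-- `max_{f ∈ S} |α(f)|`. -/
def maxAbs {F : Type} [Field F] (S : Finset (Polynomial F)) (α : Polynomial F → ℂ) : ℝ :=
  ⨆ f ∈ S, ‖α f‖

/-- `MnM F n M` : monic polynomials of degree `n` coprime to `M`. -/
def MnM (F : Type) [Field F] [Fintype F] (n : ℕ) (M : Polynomial F) :
    Finset (Polynomial F) := by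
  classical exact (Mn F n).filter fun f => IsCoprime f M

/-- The `j`-th next-to-leading coefficient of `f`: the coefficient of `T^(deg f - j)`,
taken to be `0` when `j > deg f`. -/
def nextToLeading {F : Type} [Field F] (f : Polynomial F) (j : ℕ) : F :=
  if j ≤ f.natDegree then f.coeff (f.natDegree - j) else 0

/-- A Hayes character modulo `R_{ℓ,M}`: a completely multiplicative function on monic
polynomials, nonvanishing exactly on monics coprime to `M`, depending only on the residue
mod `M` and on the first `ℓ` next-to-leading coefficients. -/
def IsHayesCharacter {F : Type} [Field F] (ℓ : ℕ) (M : Polynomial F)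
    (χ : Polynomial F → ℂ) : Prop :=
  (∀ f g : Polynomial F, f.Monic → g.Monic → χ (f * g) = χ f * χ g) ∧
  (∀ f : Polynomial F, f.Monic → (χ f ≠ 0 ↔ IsCoprime f M)) ∧
  (∀ f g : Polynomial F, f.Monic → g.Monic → M ∣ (f - g) →
    (∀ j : ℕ, 1 ≤ j → j ≤ ℓ → nextToLeading f j = nextToLeading g j) → χ f = χ g)

/-- A Hayes character is nontrivial if it takes some value other than `0` and `1`. -/
def IsNontrivialHayes {F : Type} [Field F] (ℓ : ℕ) (M : Polynomial F)
    (χ : Polynomial F → ℂ) : Prop :=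
  IsHayesCharacter ℓ M χ ∧ ∃ f : Polynomial F, f.Monic ∧ χ f ≠ 0 ∧ χ f ≠ 1

/-- The size `|ω|` of a factorization type: the sum of `d·e` over the pairs `(d,e) ∈ ω`. -/
def msize (ω : Multiset (ℕ × ℕ)) : ℕ := (ω.map fun p => p.1 * p.2).sum

section Aux

open Classical Multiset

variable {F : Type} [Field F]

/-- `ft s` is the factorization-type multiset built from a multiset of primes. -/
def ft (s : Multiset (Polynomial F)) : Multiset (ℕ × ℕ) := by
  classical exact s.toFinset.val.map fun P => (P.natDegree, s.count P)

lemma factType_eq_ft (f : Polynomial F) : factType f = ft (normalizedFactors f) := rfl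

lemma monic_of_nf {f P : Polynomial F} (h : P ∈ normalizedFactors f) : P.Monic := by
  classical
  have h1 := normalize_normalized_factor P h
  have h2 : P ≠ 0 := fun h0 => zero_notMem_normalizedFactors f (h0 ▸ h)
  have h3 := Polynomial.monic_normalize (R := F) h2
  rwa [h1] at h3

lemma monic_prod_of_nf {f : Polynomial F} {t : Multiset (Polynomial F)}
    (ht : t ≤ normalizedFactors f) : t.prod.Monic := by
  have := Polynomial.monic_multiset_prod_of_monic t id
    (fun P hP => monic_of_nf (Multiset.mem_of_le ht hP))
  rwa [Multiset.map_id] at this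

lemma prod_nf {f : Polynomial F} (hf : f.Monic) : (normalizedFactors f).prod = f := by
  have h := UniqueFactorizationMonoid.prod_normalizedFactors hf.ne_zero
  exact Polynomial.eq_of_monic_of_associated (monic_prod_of_nf le_rfl) hf h

lemma nf_prod {t : Multiset (Polynomial F)} (h1 : ∀ P ∈ t, Irreducible P)
    (h2 : ∀ P ∈ t, normalize P = P) : normalizedFactors t.prod = t := by
  rw [UniqueFactorizationMonoid.normalizedFactors_prod_eq t h1,
    Multiset.map_congr rfl h2, Multiset.map_id']

lemma nf_prod_le {f : Polynomial F} {t : Multiset (Polynomial F)}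
    (ht : t ≤ normalizedFactors f) : normalizedFactors t.prod = t :=
  nf_prod (fun P hP => irreducible_of_normalized_factor P (Multiset.mem_of_le ht hP))
    (fun P hP => normalize_normalized_factor P (Multiset.mem_of_le ht hP))

lemma ft_filter (s : Multiset (Polynomial F)) (p : ℕ → Prop) :
    ft (s.filter (fun P => p P.natDegree)) = (ft s).filter (fun q => p q.1) := by
  classical
  unfold ft
  rw [Multiset.filter_map, Multiset.toFinset_filter, Finset.filter_val]
  refine Multiset.map_congr (Multiset.filter_congr fun P _ => Iff.rfl) ?_
  intro P hP
  have hPp : p P.natDegree := (Multiset.mem_filter.mp hP).2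
  rw [Multiset.count_filter_of_pos (p := fun Q : Polynomial F => p Q.natDegree) hPp]

lemma ft_add {s t : Multiset (Polynomial F)} (h : ∀ a ∈ s, a ∉ t) :
    ft (s + t) = ft s + ft t := by
  classical
  have hd : _root_.Disjoint s.toFinset t.toFinset :=
    Multiset.disjoint_toFinset.mpr (Multiset.disjoint_left.mpr fun {a} ha => h a ha)
  unfold ft
  rw [Multiset.toFinset_add, ← Finset.disjUnion_eq_union _ _ hd]
  have hval : (s.toFinset.disjUnion t.toFinset hd).val = s.toFinset.val + t.toFinset.val := rfl
  rw [hval, Multiset.map_add]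
  congr 1
  · refine Multiset.map_congr rfl ?_
    intro P hP
    have hPt : P ∉ t := h _ (Multiset.mem_toFinset.mp hP)
    rw [Multiset.count_add, Multiset.count_eq_zero_of_notMem hPt, add_zero]
  · refine Multiset.map_congr rfl ?_
    intro P hP
    have hPs : P ∉ s := fun hc => h _ hc (Multiset.mem_toFinset.mp hP)
    rw [Multiset.count_add, Multiset.count_eq_zero_of_notMem hPs, zero_add]

lemma pair_mem_factType {g P : Polynomial F} (hP : P ∈ normalizedFactors g) :
    (P.natDegree, (normalizedFactors g).count P) ∈ factType g := by
  classical
  rw [factType_eq_ft]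
  exact Multiset.mem_map_of_mem _ (Multiset.mem_toFinset.mpr hP)

lemma natDeg_eq_msize {f : Polynomial F} (hf : f.Monic) :
    f.natDegree = msize (factType f) := by
  classical
  conv_lhs => rw [← prod_nf hf]
  rw [Polynomial.natDegree_multiset_prod_of_monic _ (fun P hP => monic_of_nf hP)]
  rw [Finset.sum_multiset_map_count]
  rw [factType_eq_ft]
  unfold ft msize
  rw [Multiset.map_map]
  rw [Finset.sum_eq_multiset_sum]
  refine congrArg Multiset.sum (Multiset.map_congr rfl ?_)
  intro P _
  simp [mul_comm]

lemma mem_Mn {n : ℕ} {f : Polynomial F} [Fintype F] :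
    f ∈ Mn F n ↔ f.Monic ∧ f.natDegree = n := by
  classical
  unfold Mn
  rw [Finset.mem_filter]
  constructor
  · exact fun h => h.2
  · rintro ⟨hm, hd⟩
    refine ⟨?_, hm, hd⟩
    unfold polysDegLE
    refine Finset.mem_image.mpr ⟨fun i => f.coeff i, Finset.mem_univ _, ?_⟩
    have h := (f.as_sum_range' (n + 1) (by omega)).symm
    simp only [← Polynomial.C_mul_X_pow_eq_monomial] at h
    rw [← Fin.sum_univ_eq_sum_range
      (fun i => Polynomial.C (f.coeff i) * Polynomial.X ^ i) (n + 1)] at h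
    exact h

lemma chi_one {ℓ : ℕ} {M : Polynomial F} {χ : Polynomial F → ℂ}
    (hχ : IsHayesCharacter ℓ M χ) : χ 1 = 1 := by
  have h1 : χ 1 = χ 1 * χ 1 := by
    have h := hχ.1 1 1 Polynomial.monic_one Polynomial.monic_one
    rwa [mul_one] at h
  have hne : χ 1 ≠ 0 := (hχ.2.1 1 Polynomial.monic_one).mpr isCoprime_one_left
  have h2 : χ 1 * χ 1 = χ 1 * 1 := by rw [mul_one]; exact h1.symm
  exact mul_left_cancel₀ hne h2

/-- degree-`a` part of `f`. -/
def extA (a : ℕ) (f : Polynomial F) : Polynomial F := by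
  classical exact ((normalizedFactors f).filter fun P => P.natDegree = a).prod

/-- complement of the degree-`a` part of `f`. -/
def coextA (a : ℕ) (f : Polynomial F) : Polynomial F := by
  classical exact ((normalizedFactors f).filter fun P => ¬ P.natDegree = a).prod

lemma extA_monic (a : ℕ) (f : Polynomial F) : (extA a f).Monic :=
  monic_prod_of_nf (Multiset.filter_le _ _)

lemma coextA_monic (a : ℕ) (f : Polynomial F) : (coextA a f).Monic :=
  monic_prod_of_nf (Multiset.filter_le _ _)

lemma extA_mul_coextA {a : ℕ} {f : Polynomial F} (hf : f.Monic) :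
    extA a f * coextA a f = f := by
  classical
  unfold extA coextA
  rw [← Multiset.prod_add, Multiset.filter_add_not]
  exact prod_nf hf

lemma factType_extA (a : ℕ) (f : Polynomial F) :
    factType (extA a f) = (factType f).filter fun q => q.1 = a := by
  classical
  rw [factType_eq_ft, factType_eq_ft]
  unfold extA
  rw [nf_prod_le (f := f)
    (Multiset.filter_le (fun P => P.natDegree = a) (normalizedFactors f))]
  convert ft_filter (normalizedFactors f) (fun d => d = a) using 2
  congr!

lemma factType_coextA (a : ℕ) (f : Polynomial F) :
    factType (coextA a f) = (factType f).filter fun q => ¬ q.1 = a := by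
  classical
  rw [factType_eq_ft, factType_eq_ft]
  unfold coextA
  rw [nf_prod_le (f := f)
    (Multiset.filter_le (fun P => ¬ P.natDegree = a) (normalizedFactors f))]
  convert ft_filter (normalizedFactors f) (fun d => ¬ d = a) using 2
  congr!

lemma deg_of_mem_nf {g P : Polynomial F} {ω : Multiset (ℕ × ℕ)} {a : ℕ}
    (hω : factType g = ω) (h : ∀ p ∈ ω, p.1 = a) (hP : P ∈ normalizedFactors g) :
    P.natDegree = a :=
  h _ (hω ▸ pair_mem_factType hP)

lemma deg_of_mem_nf' {g P : Polynomial F} {ω : Multiset (ℕ × ℕ)} {a : ℕ}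
    (hω : factType g = ω) (h : ∀ p ∈ ω, p.1 ≠ a) (hP : P ∈ normalizedFactors g) :
    P.natDegree ≠ a :=
  h _ (hω ▸ pair_mem_factType hP)

lemma factType_mul_split {a : ℕ} {g h : Polynomial F} (hg : g.Monic) (hh : h.Monic)
    (hga : ∀ P ∈ normalizedFactors g, P.natDegree = a)
    (hhna : ∀ P ∈ normalizedFactors h, P.natDegree ≠ a) :
    factType (g * h) = factType g + factType h := by
  classical
  rw [factType_eq_ft, factType_eq_ft, factType_eq_ft,
    UniqueFactorizationMonoid.normalizedFactors_mul hg.ne_zero hh.ne_zero]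
  exact ft_add (fun P hPg hPh => (hhna P hPh) (hga P hPg))

lemma extA_mul {a : ℕ} {g h : Polynomial F} (hg : g.Monic) (hh : h.Monic)
    (hga : ∀ P ∈ normalizedFactors g, P.natDegree = a)
    (hhna : ∀ P ∈ normalizedFactors h, P.natDegree ≠ a) :
    extA a (g * h) = g ∧ coextA a (g * h) = h := by
  classical
  unfold extA coextA
  rw [UniqueFactorizationMonoid.normalizedFactors_mul hg.ne_zero hh.ne_zero]
  rw [Multiset.filter_add, Multiset.filter_add]
  rw [Multiset.filter_eq_self.mpr hga, Multiset.filter_eq_nil.mpr hhna]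
  rw [Multiset.filter_eq_nil.mpr (fun P hP h' => h' (hga P hP)),
    Multiset.filter_eq_self.mpr hhna]
  rw [add_zero, zero_add]
  exact ⟨prod_nf hg, prod_nf hh⟩

lemma sum_split [Fintype F] {ℓ : ℕ} {M : Polynomial F} {χ : Polynomial F → ℂ}
    (hχ : IsHayesCharacter ℓ M χ) (a : ℕ) (ω₁ ω₂ : Multiset (ℕ × ℕ))
    (h₁ : ∀ p ∈ ω₁, p.1 = a) (h₂ : ∀ p ∈ ω₂, p.1 ≠ a) :
    ∑ f ∈ (Mn F (msize (ω₁ + ω₂))).filter (fun f => factType f = ω₁ + ω₂), χ f =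
      (∑ g ∈ (Mn F (msize ω₁)).filter (fun f => factType f = ω₁), χ g) *
      (∑ h ∈ (Mn F (msize ω₂)).filter (fun f => factType f = ω₂), χ h) := by
  classical
  rw [Finset.sum_mul_sum, ← Finset.sum_product']
  symm
  refine Finset.sum_nbij' (i := fun p => p.1 * p.2)
    (j := fun f => (extA a f, coextA a f)) ?_ ?_ ?_ ?_ ?_
  · rintro ⟨g, h⟩ hp
    rw [Finset.mem_product] at hp
    obtain ⟨hgmem, hhmem⟩ := hp
    rw [Finset.mem_filter] at hgmem hhmem
    obtain ⟨hgMn, hgft⟩ := hgmem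
    obtain ⟨hhMn, hhft⟩ := hhmem
    rw [mem_Mn] at hgMn hhMn
    have hga : ∀ P ∈ normalizedFactors g, P.natDegree = a :=
      fun P hP => deg_of_mem_nf hgft h₁ hP
    have hhna : ∀ P ∈ normalizedFactors h, P.natDegree ≠ a :=
      fun P hP => deg_of_mem_nf' hhft h₂ hP
    have hft : factType (g * h) = ω₁ + ω₂ := by
      rw [factType_mul_split hgMn.1 hhMn.1 hga hhna, hgft, hhft]
    refine Finset.mem_filter.mpr ⟨mem_Mn.mpr ⟨hgMn.1.mul hhMn.1, ?_⟩, hft⟩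
    rw [natDeg_eq_msize (hgMn.1.mul hhMn.1), hft]
  · intro f hf
    rw [Finset.mem_filter, mem_Mn] at hf
    obtain ⟨⟨hfm, _⟩, hft⟩ := hf
    refine Finset.mem_product.mpr ⟨?_, ?_⟩
    · refine Finset.mem_filter.mpr ⟨mem_Mn.mpr ⟨extA_monic a f, ?_⟩, ?_⟩
      · rw [natDeg_eq_msize (extA_monic a f), factType_extA, hft,
          Multiset.filter_add, Multiset.filter_eq_self.mpr h₁,
          Multiset.filter_eq_nil.mpr h₂, add_zero]
      · rw [factType_extA, hft, Multiset.filter_add, Multiset.filter_eq_self.mpr h₁,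
          Multiset.filter_eq_nil.mpr h₂, add_zero]
    · refine Finset.mem_filter.mpr ⟨mem_Mn.mpr ⟨coextA_monic a f, ?_⟩, ?_⟩
      · rw [natDeg_eq_msize (coextA_monic a f), factType_coextA, hft,
          Multiset.filter_add, Multiset.filter_eq_nil.mpr (fun p hp h' => h' (h₁ p hp)),
          Multiset.filter_eq_self.mpr h₂, zero_add]
      · rw [factType_coextA, hft, Multiset.filter_add,
          Multiset.filter_eq_nil.mpr (fun p hp h' => h' (h₁ p hp)),
          Multiset.filter_eq_self.mpr h₂, zero_add]
  · rintro ⟨g, h⟩ hp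
    rw [Finset.mem_product] at hp
    obtain ⟨hgmem, hhmem⟩ := hp
    rw [Finset.mem_filter, mem_Mn] at hgmem hhmem
    have hga : ∀ P ∈ normalizedFactors g, P.natDegree = a :=
      fun P hP => deg_of_mem_nf hgmem.2 h₁ hP
    have hhna : ∀ P ∈ normalizedFactors h, P.natDegree ≠ a :=
      fun P hP => deg_of_mem_nf' hhmem.2 h₂ hP
    have := extA_mul hgmem.1.1 hhmem.1.1 hga hhna
    exact Prod.ext this.1 this.2
  · intro f hf
    rw [Finset.mem_filter, mem_Mn] at hf
    exact extA_mul_coextA hf.1.1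
  · rintro ⟨g, h⟩ hp
    rw [Finset.mem_product] at hp
    obtain ⟨hgmem, hhmem⟩ := hp
    rw [Finset.mem_filter, mem_Mn] at hgmem hhmem
    exact (hχ.1 g h hgmem.1.1 hhmem.1.1).symm

lemma factType_one : factType (1 : Polynomial F) = 0 := by
  classical
  rw [factType_eq_ft, UniqueFactorizationMonoid.normalizedFactors_one]
  rfl

lemma main_induction [Fintype F] {ℓ : ℕ} {M : Polynomial F} {χ : Polynomial F → ℂ}
    (hχ : IsHayesCharacter ℓ M χ) (s : Finset ℕ) :
    ∀ ω : Multiset (ℕ × ℕ), (∀ p ∈ ω, p.1 ∈ s) →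
      ∑ f ∈ (Mn F (msize ω)).filter (fun f => factType f = ω), χ f =
        ∏ d ∈ s, ∑ f ∈ (Mn F (msize (ω.filter fun p => p.1 = d))).filter
          (fun f => factType f = ω.filter fun p => p.1 = d), χ f := by
  classical
  induction s using Finset.induction with
  | empty =>
    intro ω hω
    have hω0 : ω = 0 := Multiset.eq_zero_of_forall_notMem
      (fun p hp => absurd (hω p hp) (Finset.notMem_empty _))
    subst hω0
    rw [Finset.prod_empty]
    have hmsz : msize (0 : Multiset (ℕ × ℕ)) = 0 := rfl
    rw [hmsz]
    have hset : (Mn F 0).filter (fun f => factType f = (0 : Multiset (ℕ × ℕ))) = {1} := by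
      ext f
      rw [Finset.mem_filter, mem_Mn, Finset.mem_singleton]
      constructor
      · rintro ⟨⟨hm, hd⟩, _⟩
        exact (Polynomial.Monic.natDegree_eq_zero hm).mp hd
      · rintro rfl
        exact ⟨⟨Polynomial.monic_one, Polynomial.natDegree_one⟩, factType_one⟩
    rw [hset, Finset.sum_singleton]
    exact chi_one hχ
  | @insert a s' ha ih =>
    intro ω hω
    rw [Finset.prod_insert ha]
    have hsplit : ω.filter (fun p => p.1 = a) + ω.filter (fun p => ¬ p.1 = a) = ω :=
      Multiset.filter_add_not _ _
    have h₁ : ∀ p ∈ ω.filter (fun p : ℕ × ℕ => p.1 = a), p.1 = a :=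
      fun p hp => (Multiset.mem_filter.mp hp).2
    have h₂ : ∀ p ∈ ω.filter (fun p : ℕ × ℕ => ¬ p.1 = a), p.1 ≠ a :=
      fun p hp => (Multiset.mem_filter.mp hp).2
    have key := sum_split hχ a (ω.filter (fun p => p.1 = a))
      (ω.filter (fun p => ¬ p.1 = a)) h₁ h₂
    rw [hsplit] at key
    rw [key]
    congr 1
    have hcoords : ∀ p ∈ ω.filter (fun p : ℕ × ℕ => ¬ p.1 = a), p.1 ∈ s' := by
      intro p hp
      rw [Multiset.mem_filter] at hp
      have := hω p hp.1
      rw [Finset.mem_insert] at this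
      exact this.resolve_left hp.2
    rw [ih _ hcoords]
    refine Finset.prod_congr rfl ?_
    intro d hd
    have hda : d ≠ a := fun h => ha (h ▸ hd)
    have hff : (ω.filter (fun p : ℕ × ℕ => ¬ p.1 = a)).filter (fun p => p.1 = d) =
        ω.filter (fun p => p.1 = d) := by
      rw [Multiset.filter_filter]
      refine Multiset.filter_congr ?_
      intro p _
      constructor
      · exact fun h => h.1
      · exact fun h => ⟨h, fun h' => hda (h.symm.trans h')⟩
    rw [hff]

end Aux

open Classical in
theorem exponential_sum_multiplicative (F : Type) [Field F] [Fintype F]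
    (ℓ : ℕ) (M : Polynomial F) (hM : M ≠ 0)
    (χ : Polynomial F → ℂ) (hχ : IsHayesCharacter ℓ M χ)
    (n : ℕ) (ω : Multiset (ℕ × ℕ)) (hω : ∀ p ∈ ω, 0 < p.1 ∧ 0 < p.2)
    (hsize : msize ω = n) :
    ∑ f ∈ (Mn F n).filter (fun f => factType f = ω), χ f =
      ∏ d ∈ Finset.Icc 1 n,
        ∑ f ∈ (Mn F (msize (ω.filter fun p => p.1 = d))).filter
            (fun f => factType f = ω.filter fun p => p.1 = d), χ f := by
    classical
  have hcoords : ∀ p ∈ ω, p.1 ∈ Finset.Icc 1 n := by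
    intro p hp
    refine Finset.mem_Icc.mpr ⟨(hω p hp).1, ?_⟩
    have h1 : p.1 ≤ p.1 * p.2 := Nat.le_mul_of_pos_right _ (hω p hp).2
    have h2 : p.1 * p.2 ≤ msize ω := by
      unfold msize
      obtain ⟨t, ht⟩ := Multiset.exists_cons_of_mem
        (Multiset.mem_map_of_mem (fun p : ℕ × ℕ => p.1 * p.2) hp)
      rw [ht, Multiset.sum_cons]
      exact Nat.le_add_right _ _
    omega
  have key := main_induction hχ (Finset.Icc 1 n) ω hcoords
  rw [hsize] at key
  exact key
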